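/- For every ν with θ(u) < ν < θ_∞, one has I^D_ν > 0: the infimum of the Dirichlet energies (1/(2d))∫|∇φ|² over non-negative smooth compactly supported φ with ⨍_D θ((√u + φ)²) dz > ν is strictly positive. (Strict positivity part of the increasing homeomorphism claim (5.84b) in Remark 5.10 4).) -/

import Mathlib

open MeasureTheory
open scoped ENNReal

/-- The Dirichlet energy `(1/(2d)) ∫_{ℝ^d} |∇φ|² dz` of `φ : ℝ^d → ℝ`. -/
noncomputable def dirichletEnergy (d : ℕ) (φ : EuclideanSpace ℝ (Fin d) → ℝ) : ℝ :=
  (1 / (2 * (d : ℝ))) * ∫ z, ‖gradient φ z‖ ^ 2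

/-- Admissible test functions for `I^D_a`: smooth, compactly supported, non-negative `φ`
with `⨍_D θ((√u + φ)²) dz > a` (`⨍` denotes the normalized integral over `D`). -/
def Admissible (d : ℕ) (u : ℝ) (θ : ℝ → ℝ) (D : Set (EuclideanSpace ℝ (Fin d))) (a : ℝ)
    (φ : EuclideanSpace ℝ (Fin d) → ℝ) : Prop :=
  ContDiff ℝ (⊤ : ℕ∞) φ ∧ HasCompactSupport φ ∧ (∀ z, 0 ≤ φ z) ∧
    a < ⨍ z in D, θ ((Real.sqrt u + φ z) ^ 2)

/-- The constrained infimum `I^D_a ∈ [0,∞]` (with `inf ∅ = ∞`). -/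
noncomputable def rateI (d : ℕ) (u : ℝ) (θ : ℝ → ℝ) (D : Set (EuclideanSpace ℝ (Fin d)))
    (a : ℝ) : ℝ≥0∞ :=
  sInf {t : ℝ≥0∞ | ∃ φ, Admissible d u θ D a φ ∧ t = ENNReal.ofReal (dirichletEnergy d φ)}

open scoped NNReal
open Module


lemma measure_lowerbound (d : ℕ) (u : ℝ) (hu : 0 < u)
    (θ : ℝ → ℝ) (hθc : Continuous θ) (hθmono : MonotoneOn θ (Set.Ici 0))
    (hθnonneg : ∀ v, 0 ≤ v → 0 ≤ θ v)
    (θinf : ℝ) (hθinf : Filter.Tendsto θ Filter.atTop (nhds θinf))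
    (D : Set (EuclideanSpace ℝ (Fin d))) (hDc : IsCompact D) (hDpos : 0 < volume D)
    (ν : ℝ) (hν1 : θ u < ν) (hν2 : ν < θinf) :
    ∃ ε : ℝ, 0 < ε ∧ ∃ m : ℝ, 0 < m ∧ ∀ φ : EuclideanSpace ℝ (Fin d) → ℝ,
      Admissible d u θ D ν φ →
      ENNReal.ofReal m ≤ volume {z ∈ D | ε ≤ φ z} := by
  have hsq : Real.sqrt u ^ 2 = u := Real.sq_sqrt hu.le
  have hcont : Continuous fun t : ℝ => θ ((Real.sqrt u + t) ^ 2) := by fun_prop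
  have htend : Filter.Tendsto (fun t : ℝ => θ ((Real.sqrt u + t) ^ 2))
      (nhdsWithin 0 (Set.Ioi 0)) (nhds (θ u)) := by
    have := (hcont.tendsto 0).mono_left (nhdsWithin_le_nhds (s := Set.Ioi 0))
    simpa [hsq] using this
  obtain ⟨ε, hεν, hεpos⟩ := ((htend.eventually_lt_const hν1).and self_mem_nhdsWithin).exists
  set ν' := θ ((Real.sqrt u + ε) ^ 2) with hν'def
  have hν'0 : 0 ≤ ν' := hθnonneg _ (sq_nonneg _)
  have hθle : ∀ v, 0 ≤ v → θ v ≤ θinf := fun v hv =>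
    ge_of_tendsto hθinf (Filter.eventually_atTop.2
      ⟨v, fun w hw => hθmono hv (hv.trans hw) hw⟩)
  have hgap : 0 < θinf - ν' := sub_pos.2 (hεν.trans hν2)
  have hDfin : volume D ≠ ⊤ := hDc.measure_lt_top.ne
  set V := (volume D).toReal with hVdef
  have hV : 0 < V := ENNReal.toReal_pos hDpos.ne' hDfin
  refine ⟨ε, hεpos, (ν - ν') * V / (θinf - ν'), by
    apply div_pos (mul_pos (sub_pos.2 hεν) hV) hgap, ?_⟩
  intro φ ⟨hφ1, hφ2, hφ3, hφ4⟩
  set f := fun z => θ ((Real.sqrt u + φ z) ^ 2) with hfdef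
  have hfc : Continuous f := hθc.comp ((continuous_const.add hφ1.continuous).pow 2)
  have hDm : MeasurableSet D := hDc.measurableSet
  have hInt : IntegrableOn f D := hfc.continuousOn.integrableOn_compact hDc
  set A := {z ∈ D | ε ≤ φ z} with hAdef
  have hAeq : A = D ∩ {z | ε ≤ φ z} := rfl
  have hAm : MeasurableSet A := hDm.inter
    (measurableSet_le measurable_const hφ1.continuous.measurable)
  have hAsub : A ⊆ D := fun z hz => hz.1
  have hAfin : volume A ≠ ⊤ := ((measure_mono hAsub).trans_lt hDc.measure_lt_top).ne
  rw [setAverage_eq, smul_eq_mul, inv_mul_eq_div, measureReal_def, ← hVdef, lt_div_iff₀ hV] at hφ4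
  have hsplit : (∫ z in A, f z) + ∫ z in D \ {z | ε ≤ φ z}, f z = ∫ z in D, f z := by
    rw [hAeq]
    exact integral_inter_add_diff (measurableSet_le measurable_const hφ1.continuous.measurable) hInt
  have hA1 : ∫ z in A, f z ≤ (volume A).toReal * θinf := by
    calc ∫ z in A, f z ≤ ∫ _z in A, θinf :=
          setIntegral_mono_on (hInt.mono_set hAsub)
            (integrableOn_const hAfin)
            hAm (fun z _ => hθle _ (sq_nonneg _))
      _ = (volume A).toReal * θinf := by rw [setIntegral_const, smul_eq_mul, measureReal_def]
  have hBsub : D \ {z | ε ≤ φ z} ⊆ D := Set.diff_subset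
  have hBfin : volume (D \ {z | ε ≤ φ z}) ≠ ⊤ :=
    ((measure_mono hBsub).trans_lt hDc.measure_lt_top).ne
  have hB1 : ∫ z in D \ {z | ε ≤ φ z}, f z ≤ (volume (D \ {z | ε ≤ φ z})).toReal * ν' := by
    calc ∫ z in D \ {z | ε ≤ φ z}, f z ≤ ∫ _z in D \ {z | ε ≤ φ z}, ν' :=
          setIntegral_mono_on (hInt.mono_set hBsub)
            (integrableOn_const hBfin)
            (hDm.diff (measurableSet_le measurable_const hφ1.continuous.measurable))
            (fun z hz => by
              have hzφ : φ z < ε := by simpa using hz.2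
              exact hθmono (Set.mem_Ici.2 (sq_nonneg _)) (Set.mem_Ici.2 (sq_nonneg _))
                (by nlinarith [hφ3 z, Real.sqrt_nonneg u]))
      _ = _ := by rw [setIntegral_const, smul_eq_mul, measureReal_def]
  have hmeas : volume A + volume (D \ {z | ε ≤ φ z}) = volume D := by
    rw [hAeq]
    exact measure_inter_add_diff D (measurableSet_le measurable_const hφ1.continuous.measurable)
  have hmeasR : (volume A).toReal + (volume (D \ {z | ε ≤ φ z})).toReal = V := by
    rw [← ENNReal.toReal_add hAfin hBfin, hmeas]
  set a := (volume A).toReal with hadef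
  have ha0 : 0 ≤ a := ENNReal.toReal_nonneg
  have key : (ν - ν') * V / (θinf - ν') ≤ a := by
    rw [div_le_iff₀ hgap]
    nlinarith [hφ4, hsplit, hA1, hB1, hmeasR]
  exact ENNReal.ofReal_le_of_le_toReal key

lemma energyLB (d : ℕ) (hd : 3 ≤ d) (ε m : ℝ) (hε : 0 < ε) (hm : 0 < m) :
    ∃ b : ℝ, 0 < b ∧ ∀ φ : EuclideanSpace ℝ (Fin d) → ℝ,
      ContDiff ℝ (⊤ : ℕ∞) φ → HasCompactSupport φ → (∀ z, 0 ≤ φ z) →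
      ∀ A : Set (EuclideanSpace ℝ (Fin d)), MeasurableSet A →
        (∀ z ∈ A, ε ≤ φ z) → ENNReal.ofReal m ≤ volume A →
        b ≤ dirichletEnergy d φ := by
  have hd2 : (2:ℝ) < (d:ℝ) := by exact_mod_cast lt_of_lt_of_le (by norm_num) hd
  have hdpos : (0:ℝ) < d := by linarith
  set p' : ℝ≥0 := Real.toNNReal (2 * d / ((d:ℝ) - 2)) with hp'def
  have hp'R : (p' : ℝ) = 2 * d / ((d:ℝ) - 2) := Real.coe_toNNReal _ (le_of_lt (div_pos (by positivity) (by linarith)))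
  have hp'pos : (0:ℝ) < p' := by rw [hp'R]; exact div_pos (by positivity) (by linarith)
  have hfr : finrank ℝ (EuclideanSpace ℝ (Fin d)) = d := finrank_euclideanSpace_fin
  set C0 : ℝ≥0 :=
    eLpNormLESNormFDerivOfEqInnerConst (volume : Measure (EuclideanSpace ℝ (Fin d))) 2 with hC0
  set C : ℝ≥0 := max C0 1 with hC
  have hCpos : (0:ℝ≥0) < C := lt_of_lt_of_le one_pos (le_max_right _ _)
  set κ : ℝ≥0∞ := (‖ε‖₊ : ℝ≥0∞) * ENNReal.ofReal m ^ (1 / ((p' : ℝ≥0∞)).toReal) with hκ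
  have hκ0 : κ ≠ 0 := by
    apply mul_ne_zero
    · simpa using hε.ne'
    · apply (ENNReal.rpow_pos _ _).ne'
      · simpa using hm
      · exact ENNReal.ofReal_ne_top
  have hκtop : κ ≠ ⊤ := by
    apply ENNReal.mul_ne_top ENNReal.coe_ne_top
    exact ENNReal.rpow_ne_top_of_nonneg (by positivity) ENNReal.ofReal_ne_top
  have hdiv0 : κ / C ≠ 0 := by
    simp only [ne_eq, ENNReal.div_eq_zero_iff, hκ0, ENNReal.coe_ne_top, or_self, false_or]
    exact fun h => absurd h (by simp)
  have hdivtop : κ / C ≠ ⊤ := by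
    refine (ENNReal.div_lt_top hκtop ?_).ne
    exact_mod_cast hCpos.ne'
  refine ⟨(1 / (2 * (d : ℝ))) * ((κ / C) ^ (2:ℕ)).toReal, ?_, ?_⟩
  · apply mul_pos (by positivity)
    apply ENNReal.toReal_pos
    · exact pow_ne_zero _ hdiv0
    · exact ENNReal.pow_ne_top hdivtop
  intro φ hφ1 hφ2 hφ3 A hAm hAφ hAvol
  -- integrability of the gradient-squared
  have hF : Continuous (fderiv ℝ φ) := hφ1.continuous_fderiv (by simp)
  have hFcs : HasCompactSupport (fderiv ℝ φ) := hφ2.fderiv (𝕜 := ℝ)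
  have hg : Continuous fun z => ‖fderiv ℝ φ z‖ ^ 2 := hF.norm.pow 2
  have hgcs : HasCompactSupport fun z => ‖fderiv ℝ φ z‖ ^ 2 :=
    hFcs.norm.comp_left (g := fun t : ℝ => t ^ 2) (by simp)
  have hgInt : Integrable fun z => ‖fderiv ℝ φ z‖ ^ 2 := hg.integrable_of_hasCompactSupport hgcs
  have hgnonneg : (0:ℝ) ≤ ∫ z, ‖fderiv ℝ φ z‖ ^ 2 := integral_nonneg fun z => sq_nonneg _
  set X : ℝ≥0∞ := ENNReal.ofReal (∫ z, ‖fderiv ℝ φ z‖ ^ 2) with hX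
  -- Sobolev inequality
  have hsob := eLpNorm_le_eLpNorm_fderiv_of_eq_inner (F' := ℝ)
    (volume : Measure (EuclideanSpace ℝ (Fin d))) (hφ1.of_le (by simp)) hφ2
    (p := 2) (p' := p') one_le_two (by rw [hfr]; omega)
    (by
      rw [hfr, hp'R]
      push_cast
      rw [inv_div]
      rw [inv_eq_one_div, inv_eq_one_div,
        div_sub_div _ _ (two_ne_zero) (by positivity : (d:ℝ) ≠ 0),
        div_eq_div_iff (by positivity) (by positivity)]
      ring)
  -- lower bound on eLpNorm φ p'
  have hμA : (volume : Measure (EuclideanSpace ℝ (Fin d))).restrict A ≠ 0 := by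
    intro h
    have : volume A = 0 := by
      have := congrArg (fun μ => μ Set.univ) h
      simpa [Measure.restrict_apply_univ] using this
    rw [this] at hAvol
    simp only [nonpos_iff_eq_zero, ENNReal.ofReal_eq_zero] at hAvol
    linarith
  have hlow : κ ≤ eLpNorm φ p' volume := by
    calc κ ≤ (‖ε‖₊ : ℝ≥0∞) * volume A ^ (1 / ((p' : ℝ≥0∞)).toReal) := by
          rw [hκ]
          gcongr
      _ = eLpNorm (fun _ => ε) p' ((volume : Measure (EuclideanSpace ℝ (Fin d))).restrict A) := by
          rw [eLpNorm_const ε (by exact_mod_cast hp'pos.ne') hμA, Measure.restrict_apply_univ, enorm_eq_nnnorm]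
      _ ≤ eLpNorm φ p' ((volume : Measure (EuclideanSpace ℝ (Fin d))).restrict A) := by
          apply eLpNorm_mono_ae
          filter_upwards [ae_restrict_mem hAm] with z hz
          rw [Real.norm_of_nonneg hε.le, Real.norm_of_nonneg (hφ3 z)]
          exact hAφ z hz
      _ ≤ eLpNorm φ p' volume := eLpNorm_mono_measure φ Measure.restrict_le_self
  -- eLpNorm of fderiv equals X^(1/2)
  have h2real : (2:ℝ≥0∞).toReal = 2 := by simp
  have hel : eLpNorm (fderiv ℝ φ) 2 volume = X ^ (1 / (2:ℝ)) := by
    rw [eLpNorm_eq_lintegral_rpow_enorm_toReal (by norm_num) (by norm_num), h2real]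
    congr 1
    rw [hX, ofReal_integral_eq_lintegral_ofReal hgInt
      (Filter.Eventually.of_forall fun z => sq_nonneg _)]
    apply lintegral_congr fun z => ?_
    rw [ENNReal.ofReal_pow (norm_nonneg _), ofReal_norm,
      ← ENNReal.rpow_natCast]
    norm_num
  -- combine
  have hchain : κ ≤ C * X ^ (1 / (2:ℝ)) := by
    calc κ ≤ eLpNorm φ p' volume := hlow
      _ ≤ C0 * eLpNorm (fderiv ℝ φ) 2 volume := by
          convert hsob using 2 <;> norm_num [hC0]
      _ ≤ C * X ^ (1 / (2:ℝ)) := by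
          rw [hel]; gcongr; exact_mod_cast le_max_left _ _
  have hdivle : κ / C ≤ X ^ (1 / (2:ℝ)) := ENNReal.div_le_of_le_mul' hchain
  have hXge : (κ / C) ^ (2:ℕ) ≤ X := by
    calc (κ / C) ^ (2:ℕ) ≤ (X ^ (1 / (2:ℝ))) ^ (2:ℕ) := by gcongr
      _ = X := by
          rw [← ENNReal.rpow_natCast (X ^ (1 / (2:ℝ))), ← ENNReal.rpow_mul]
          norm_num
  have hre : ((κ / C) ^ (2:ℕ)).toReal ≤ ∫ z, ‖fderiv ℝ φ z‖ ^ 2 :=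
    ENNReal.toReal_le_of_le_ofReal hgnonneg hXge
  have hgradeq : (fun z => ‖gradient φ z‖ ^ 2) = fun z => ‖fderiv ℝ φ z‖ ^ 2 := by
    funext z
    rw [gradient, LinearIsometryEquiv.norm_map]
  rw [dirichletEnergy, hgradeq]
  exact mul_le_mul_of_nonneg_left hre (by positivity)

/-- Strict positivity part of claim (5.84b) in Remark 5.10 4): for `θ(u) < ν < θ_∞`,
the constrained infimum `I^D_ν` is strictly positive. -/

theorem rateI_pos (d : ℕ) (hd : 3 ≤ d) (u : ℝ) (hu : 0 < u)
    (θ : ℝ → ℝ) (hθc : Continuous θ) (hθmono : MonotoneOn θ (Set.Ici 0))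
    (hθstrict : StrictMonoOn θ (Set.Ici 0))
    (hθ0 : θ 0 = 0) (hθnonneg : ∀ v, 0 ≤ v → 0 ≤ θ v)
    (θinf : ℝ) (hθinf : Filter.Tendsto θ Filter.atTop (nhds θinf))
    (D : Set (EuclideanSpace ℝ (Fin d))) (hDc : IsCompact D) (hDpos : 0 < volume D)
    (hDcl : ∃ U : Set (EuclideanSpace ℝ (Fin d)),
      IsOpen U ∧ Bornology.IsBounded U ∧ 0 ∈ U ∧ D = closure U)
    (ν : ℝ) (hν1 : θ u < ν) (hν2 : ν < θinf) :
    0 < rateI d u θ D ν := by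
  obtain ⟨ε, hε, m, hm, hA⟩ := measure_lowerbound d u hu θ hθc hθmono hθnonneg
    θinf hθinf D hDc hDpos ν hν1 hν2
  obtain ⟨b, hb, hball⟩ := energyLB d hd ε m hε hm
  have hle : ENNReal.ofReal b ≤ rateI d u θ D ν := by
    apply le_sInf
    rintro t ⟨φ, hφ, rfl⟩
    apply ENNReal.ofReal_le_ofReal
    exact hball φ hφ.1 hφ.2.1 hφ.2.2.1 _
      (hDc.measurableSet.inter
        (measurableSet_le measurable_const hφ.1.continuous.measurable))
      (fun z hz => hz.2) (hA φ hφ)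
  exact lt_of_lt_of_le (by simpa using hb) hle
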